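/- arXiv:math/0606288 — 3 statements merged into one kernel-verified Lean document; each statement's English description precedes it below -/
import Mathlib

section
/- The function U(x,τ) = 1/(λ|x|² + e^{4λτ}) on ℝ² × ℝ, for any constant λ > 0, satisfies the logarithmic diffusion equation ∂U/∂τ = Δ log U at every point (x,τ) ∈ ℝ² × ℝ. -/
/-- Euclidean Laplacian of `f : ℝ × ℝ → ℝ` at `x`, as sum of second partial derivatives. -/
noncomputable def lap (f : ℝ × ℝ → ℝ) (x : ℝ × ℝ) : ℝ :=
  deriv (deriv (fun a => f (a, x.2))) x.1 + deriv (deriv (fun b => f (x.1, b))) x.2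

lemma aux_D_hasDeriv (l c a : ℝ) : HasDerivAt (fun a => l * a ^ 2 + c) (2 * l * a) a := by
  have h := ((hasDerivAt_pow 2 a).const_mul l).add_const c
  refine h.congr_deriv ?_
  push_cast; ring

lemma aux_first_deriv (l c : ℝ) (hl : 0 < l) (hc : 0 < c) :
    deriv (fun a => Real.log (1 / (l * a ^ 2 + c))) =
      fun a => -(2 * l * a) / (l * a ^ 2 + c) := by
  funext a
  have hD : (0:ℝ) < l * a ^ 2 + c := by positivity
  have h1 : (fun a => Real.log (1 / (l * a ^ 2 + c))) =
      fun a => -Real.log (l * a ^ 2 + c) := by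
    funext a; rw [one_div, Real.log_inv]
  rw [h1]
  have h2 : HasDerivAt (fun a => -Real.log (l * a ^ 2 + c))
      (-(2 * l * a / (l * a ^ 2 + c))) a :=
    ((aux_D_hasDeriv l c a).log hD.ne').neg
  rw [h2.deriv]; ring

lemma aux_second_deriv (l c a : ℝ) (hl : 0 < l) (hc : 0 < c) :
    deriv (deriv (fun a => Real.log (1 / (l * a ^ 2 + c)))) a =
      (2 * l ^ 2 * a ^ 2 - 2 * l * c) / (l * a ^ 2 + c) ^ 2 := by
  rw [aux_first_deriv l c hl hc]
  have hD : (0:ℝ) < l * a ^ 2 + c := by positivity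
  have hnum : HasDerivAt (fun a : ℝ => -(2 * l * a)) (-(2 * l)) a := by
    have := ((hasDerivAt_id' a).const_mul (2 * l)).neg; simp only [mul_one] at this; exact this
  have h : HasDerivAt (fun a => -(2 * l * a) / (l * a ^ 2 + c))
      ((-(2 * l) * (l * a ^ 2 + c) - -(2 * l * a) * (2 * l * a)) / (l * a ^ 2 + c) ^ 2) a :=
    hnum.div (aux_D_hasDeriv l c a) hD.ne'
  rw [h.deriv]; ring

/-- The cigar soliton `U(x,τ) = 1/(λ|x|² + e^{4λτ})` satisfies `∂U/∂τ = Δ log U` on `ℝ² × ℝ`. -/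
theorem stmt_0 (l : ℝ) (hl : 0 < l)
    (U : ℝ × ℝ → ℝ → ℝ)
    (hU : ∀ x τ, U x τ = 1 / (l * (x.1 ^ 2 + x.2 ^ 2) + Real.exp (4 * l * τ))) :
    ∀ (x : ℝ × ℝ) (τ : ℝ),
      deriv (fun t => U x t) τ = lap (fun y => Real.log (U y τ)) x := by
  intro x τ
  set E : ℝ := Real.exp (4 * l * τ) with hE
  have hEpos : 0 < E := Real.exp_pos _
  have hD : (0:ℝ) < l * (x.1 ^ 2 + x.2 ^ 2) + E := by positivity
  -- time derivative
  have htime : deriv (fun t => U x t) τ = -(4 * l * E) / (l * (x.1 ^ 2 + x.2 ^ 2) + E) ^ 2 := by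
    have h1 : (fun t => U x t) =
        fun t => (l * (x.1 ^ 2 + x.2 ^ 2) + Real.exp (4 * l * t))⁻¹ := by
      funext t; rw [hU, one_div]
    rw [h1]
    have hexp : HasDerivAt (fun t : ℝ => Real.exp (4 * l * t)) (4 * l * Real.exp (4 * l * τ)) τ := by
      have := ((hasDerivAt_id τ).const_mul (4 * l)).exp
      simpa [mul_comm] using this
    have hden : HasDerivAt (fun t => l * (x.1 ^ 2 + x.2 ^ 2) + Real.exp (4 * l * t))
        (4 * l * Real.exp (4 * l * τ)) τ := by
      simpa using hexp.const_add (l * (x.1 ^ 2 + x.2 ^ 2))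
    have h2 : HasDerivAt (fun t => (l * (x.1 ^ 2 + x.2 ^ 2) + Real.exp (4 * l * t))⁻¹) _ τ :=
      hden.inv hD.ne'
    rw [h2.deriv]
  -- spatial derivatives
  have hx1 : (fun a => Real.log (U (a, x.2) τ)) =
      fun a => Real.log (1 / (l * a ^ 2 + (l * x.2 ^ 2 + E))) := by
    funext a; rw [hU]; congr 1; simp only [← hE]; ring
  have hx2 : (fun b => Real.log (U (x.1, b) τ)) =
      fun b => Real.log (1 / (l * b ^ 2 + (l * x.1 ^ 2 + E))) := by
    funext b; rw [hU]; congr 1; simp only [← hE]; ring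
  have hc1 : (0:ℝ) < l * x.2 ^ 2 + E := by positivity
  have hc2 : (0:ℝ) < l * x.1 ^ 2 + E := by positivity
  rw [htime, lap]
  simp only [hx1, hx2]
  rw [aux_second_deriv l _ x.1 hl hc1, aux_second_deriv l _ x.2 hl hc2]
  have hD1 : (l * x.1 ^ 2 + (l * x.2 ^ 2 + E)) = l * (x.1 ^ 2 + x.2 ^ 2) + E := by ring
  have hD2 : (l * x.2 ^ 2 + (l * x.1 ^ 2 + E)) = l * (x.1 ^ 2 + x.2 ^ 2) + E := by ring
  rw [hD1, hD2]
  field_simp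
  ring
end

section
/- For any constants t ≥ 0 and A > 0, the function u(x,t) = 2(t+A)/(|x|² log²|x|) satisfies the equation ∂u/∂t = Δ log u on the region {x ∈ ℝ² : |x| > 1} × (0,∞). -/
open Real

/-- On `{1 < a² + c²}` the function `log (K/((a²+c²) log²√(a²+c²)))` equals a nice closed form. -/
lemma logu_eq (K c : ℝ) (hK : 0 < K) {b : ℝ} (hb : 1 < b ^ 2 + c ^ 2) :
    Real.log (K / ((b ^ 2 + c ^ 2) * (Real.log (Real.sqrt (b ^ 2 + c ^ 2))) ^ 2)) =
      (Real.log K + 2 * Real.log 2) - Real.log (b ^ 2 + c ^ 2)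
        - 2 * Real.log (Real.log (b ^ 2 + c ^ 2)) := by
  set q := b ^ 2 + c ^ 2 with hq
  have hq0 : 0 < q := lt_trans one_pos hb
  have hL : 0 < Real.log q := Real.log_pos hb
  rw [Real.log_sqrt hq0.le]
  have h1 : (Real.log q / 2) ^ 2 ≠ 0 := by positivity
  rw [Real.log_div (ne_of_gt hK) (by positivity), Real.log_mul (ne_of_gt hq0) h1,
    Real.log_pow, Real.log_div (ne_of_gt hL) two_ne_zero]
  push_cast
  ring

/-- First derivative of the closed form. -/
lemma hasDerivAt_phi (K c : ℝ) {b : ℝ} (hb : 1 < b ^ 2 + c ^ 2) :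
    HasDerivAt (fun a => (Real.log K + 2 * Real.log 2) - Real.log (a ^ 2 + c ^ 2)
        - 2 * Real.log (Real.log (a ^ 2 + c ^ 2)))
      (-((2 * b) / (b ^ 2 + c ^ 2))
        - (4 * b) / ((b ^ 2 + c ^ 2) * Real.log (b ^ 2 + c ^ 2))) b := by
  have hq0 : (0:ℝ) < b ^ 2 + c ^ 2 := lt_trans one_pos hb
  have hL : 0 < Real.log (b ^ 2 + c ^ 2) := Real.log_pos hb
  have h1 : HasDerivAt (fun a : ℝ => a ^ 2 + c ^ 2) (2 * b) b := by
    simpa using (hasDerivAt_pow 2 b).add_const (c ^ 2)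
  have h2 : HasDerivAt (fun a : ℝ => Real.log (a ^ 2 + c ^ 2))
      ((b ^ 2 + c ^ 2)⁻¹ * (2 * b)) b :=
    by have := (Real.hasDerivAt_log (ne_of_gt hq0)).comp b h1; exact this
  have h3 : HasDerivAt (fun a : ℝ => Real.log (Real.log (a ^ 2 + c ^ 2)))
      ((Real.log (b ^ 2 + c ^ 2))⁻¹ * ((b ^ 2 + c ^ 2)⁻¹ * (2 * b))) b :=
    by have := (Real.hasDerivAt_log (ne_of_gt hL)).comp b h2; exact this
  have := ((hasDerivAt_const b (Real.log K + 2 * Real.log 2)).sub h2).sub (h3.const_mul 2)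
  refine this.congr_deriv ?_
  field_simp
  ring

/-- Second derivative: derivative of the first-derivative formula. -/
lemma hasDerivAt_psi (c : ℝ) {a : ℝ} (ha : 1 < a ^ 2 + c ^ 2) :
    HasDerivAt (fun b => -((2 * b) / (b ^ 2 + c ^ 2))
        - (4 * b) / ((b ^ 2 + c ^ 2) * Real.log (b ^ 2 + c ^ 2)))
      ((4 * a ^ 2 - 2 * (a ^ 2 + c ^ 2)) / (a ^ 2 + c ^ 2) ^ 2
        + (8 * a ^ 2 * (Real.log (a ^ 2 + c ^ 2) + 1)
            - 4 * (a ^ 2 + c ^ 2) * Real.log (a ^ 2 + c ^ 2))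
          / ((a ^ 2 + c ^ 2) ^ 2 * (Real.log (a ^ 2 + c ^ 2)) ^ 2)) a := by
  have hq0 : (0:ℝ) < a ^ 2 + c ^ 2 := lt_trans one_pos ha
  have hL : 0 < Real.log (a ^ 2 + c ^ 2) := Real.log_pos ha
  have h1 : HasDerivAt (fun b : ℝ => b ^ 2 + c ^ 2) (2 * a) a := by
    simpa using (hasDerivAt_pow 2 a).add_const (c ^ 2)
  have h2 : HasDerivAt (fun b : ℝ => Real.log (b ^ 2 + c ^ 2))
      ((a ^ 2 + c ^ 2)⁻¹ * (2 * a)) a :=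
    by have := (Real.hasDerivAt_log (ne_of_gt hq0)).comp a h1; exact this
  have hnum1 : HasDerivAt (fun b : ℝ => 2 * b) 2 a := by
    simpa using (hasDerivAt_id a).const_mul 2
  have hnum2 : HasDerivAt (fun b : ℝ => 4 * b) 4 a := by
    simpa using (hasDerivAt_id a).const_mul 4
  have hg2 : HasDerivAt (fun b : ℝ => (b ^ 2 + c ^ 2) * Real.log (b ^ 2 + c ^ 2))
      (2 * a * Real.log (a ^ 2 + c ^ 2) + (a ^ 2 + c ^ 2) * ((a ^ 2 + c ^ 2)⁻¹ * (2 * a))) a :=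
    h1.mul h2
  have hg20 : (a ^ 2 + c ^ 2) * Real.log (a ^ 2 + c ^ 2) ≠ 0 := by positivity
  have := ((hnum1.div h1 (ne_of_gt hq0)).neg).sub (hnum2.div hg2 hg20)
  refine this.congr_deriv ?_
  field_simp
  ring

/-- The second derivative of `a ↦ log (K/((a²+c²) log²√(a²+c²)))` at a point with `1 < a²+c²`. -/
lemma key (K c : ℝ) (hK : 0 < K) {a : ℝ} (ha : 1 < a ^ 2 + c ^ 2) :
    deriv (deriv (fun b =>
        Real.log (K / ((b ^ 2 + c ^ 2) * (Real.log (Real.sqrt (b ^ 2 + c ^ 2))) ^ 2)))) a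
      = (4 * a ^ 2 - 2 * (a ^ 2 + c ^ 2)) / (a ^ 2 + c ^ 2) ^ 2
        + (8 * a ^ 2 * (Real.log (a ^ 2 + c ^ 2) + 1)
            - 4 * (a ^ 2 + c ^ 2) * Real.log (a ^ 2 + c ^ 2))
          / ((a ^ 2 + c ^ 2) ^ 2 * (Real.log (a ^ 2 + c ^ 2)) ^ 2) := by
  set f := fun b : ℝ =>
    Real.log (K / ((b ^ 2 + c ^ 2) * (Real.log (Real.sqrt (b ^ 2 + c ^ 2))) ^ 2)) with hf
  set ψ := fun b : ℝ => -((2 * b) / (b ^ 2 + c ^ 2))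
      - (4 * b) / ((b ^ 2 + c ^ 2) * Real.log (b ^ 2 + c ^ 2)) with hψ
  have hS : IsOpen {b : ℝ | 1 < b ^ 2 + c ^ 2} := by
    apply isOpen_lt continuous_const
    continuity
  -- deriv f = ψ on S
  have hder : ∀ b ∈ {b : ℝ | 1 < b ^ 2 + c ^ 2}, deriv f b = ψ b := by
    intro b hb
    have heq : f =ᶠ[nhds b] (fun a => (Real.log K + 2 * Real.log 2) - Real.log (a ^ 2 + c ^ 2)
        - 2 * Real.log (Real.log (a ^ 2 + c ^ 2))) := by
      filter_upwards [hS.mem_nhds hb] with y hy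
      exact logu_eq K c hK hy
    rw [heq.deriv_eq, (hasDerivAt_phi K c hb).deriv]
  have hev : deriv f =ᶠ[nhds a] ψ := by
    filter_upwards [hS.mem_nhds ha] with y hy
    exact hder y hy
  rw [hev.deriv_eq, (hasDerivAt_psi c ha).deriv]

/-- The logarithmic cusp `u(x,t) = 2(t+A)/(|x|² log²|x|)` satisfies `u_t = Δ log u`
on `{|x| > 1} × (0,∞)`. -/
theorem stmt_1 (A : ℝ) (hA : 0 < A)
    (u : ℝ × ℝ → ℝ → ℝ)
    (hu : ∀ x t, u x t =
      2 * (t + A) / ((x.1 ^ 2 + x.2 ^ 2) * (Real.log (Real.sqrt (x.1 ^ 2 + x.2 ^ 2))) ^ 2)) :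
    ∀ (x : ℝ × ℝ) (t : ℝ), 1 < Real.sqrt (x.1 ^ 2 + x.2 ^ 2) → 0 < t →
      deriv (fun s => u x s) t = lap (fun y => Real.log (u y t)) x := by
  intro x t hr ht
  have hq1 : 1 < x.1 ^ 2 + x.2 ^ 2 := by
    have h0 : (0:ℝ) ≤ x.1 ^ 2 + x.2 ^ 2 := by positivity
    have h := (Real.lt_sqrt (by norm_num : (0:ℝ) ≤ 1)).mp hr
    simpa using h
  have hq0 : (0:ℝ) < x.1 ^ 2 + x.2 ^ 2 := lt_trans one_pos hq1
  have hL : 0 < Real.log (x.1 ^ 2 + x.2 ^ 2) := Real.log_pos hq1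
  have hK : (0:ℝ) < 2 * (t + A) := by linarith
  -- time derivative
  have hlhs : deriv (fun s => u x s) t =
      2 / ((x.1 ^ 2 + x.2 ^ 2) * (Real.log (Real.sqrt (x.1 ^ 2 + x.2 ^ 2))) ^ 2) := by
    simp only [hu]
    have h : HasDerivAt (fun s : ℝ => 2 * (s + A) /
        ((x.1 ^ 2 + x.2 ^ 2) * (Real.log (Real.sqrt (x.1 ^ 2 + x.2 ^ 2))) ^ 2))
        (2 * 1 / ((x.1 ^ 2 + x.2 ^ 2) * (Real.log (Real.sqrt (x.1 ^ 2 + x.2 ^ 2))) ^ 2)) t :=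
      (((hasDerivAt_id t).add_const A).const_mul 2).div_const _
    rw [h.deriv]
    ring
  rw [hlhs]
  -- the Laplacian
  simp only [lap, hu]
  have h1 := key (2 * (t + A)) x.2 hK hq1
  have hswap : (fun b : ℝ => Real.log (2 * (t + A) /
      ((x.1 ^ 2 + b ^ 2) * (Real.log (Real.sqrt (x.1 ^ 2 + b ^ 2))) ^ 2))) =
      (fun b : ℝ => Real.log (2 * (t + A) /
      ((b ^ 2 + x.1 ^ 2) * (Real.log (Real.sqrt (b ^ 2 + x.1 ^ 2))) ^ 2))) := by
    funext b
    rw [add_comm (x.1 ^ 2) (b ^ 2)]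
  have hq1' : 1 < x.2 ^ 2 + x.1 ^ 2 := by rw [add_comm]; exact hq1
  have h2 := key (2 * (t + A)) x.1 hK hq1'
  rw [hswap, h1, h2]
  have e : x.2 ^ 2 + x.1 ^ 2 = x.1 ^ 2 + x.2 ^ 2 := by ring
  rw [e, Real.log_sqrt hq0.le]
  have hL2 : Real.log (x.1 ^ 2 + x.2 ^ 2) ≠ 0 := ne_of_gt hL
  field_simp
  ring
end

section
/- Let T > 0 and let W : (T,∞) × ℝ → ℝ be a C¹ solution of W_s = (η W)_η = η W_η + W such that for each s, lim_{η→T⁺} W(η,s) = 2 and lim_{η→∞} W(η,s) = 0, and W is bounded. If additionally W is nonincreasing in η for each s, then W(η,s) = 2T/η for all η > T, s ∈ ℝ. -/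
open Filter

/-- A bounded `C¹` solution of the transport equation `W_s = η W_η + W` on `(T,∞) × ℝ`,
nonincreasing in `η`, with `W → 2` as `η → T⁺` and `W → 0` as `η → ∞`, is `W = 2T/η`. -/
theorem stmt_13 (T : ℝ) (hT : 0 < T) (W : ℝ → ℝ → ℝ)
    (hC1 : ContDiffOn ℝ 1 (fun p : ℝ × ℝ => W p.1 p.2) (Set.Ioi T ×ˢ Set.univ))
    (hPDE : ∀ η s, T < η →
      deriv (fun σ => W η σ) s = η * deriv (fun a => W a s) η + W η s)
    (hbdT : ∀ s, Tendsto (fun η => W η s) (nhdsWithin T (Set.Ioi T)) (nhds 2))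
    (hbdtop : ∀ s, Tendsto (fun η => W η s) atTop (nhds 0))
    (hbound : ∃ M : ℝ, ∀ η s, T < η → |W η s| ≤ M)
    (hmono : ∀ s, AntitoneOn (fun η => W η s) (Set.Ioi T)) :
    ∀ η s, T < η → W η s = 2 * T / η := by
  intro η₀ s₀ hη₀
  have hη₀pos : (0:ℝ) < η₀ := hT.trans hη₀
  set f : ℝ × ℝ → ℝ := fun p : ℝ × ℝ => W p.1 p.2 with hfdef
  have hUopen : IsOpen (Set.Ioi T ×ˢ (Set.univ : Set ℝ)) := isOpen_Ioi.prod isOpen_univ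
  have hdiff : ∀ p : ℝ × ℝ, T < p.1 → HasFDerivAt f (fderiv ℝ f p) p := by
    intro p hp
    have hda : DifferentiableAt ℝ f p :=
      (hC1.differentiableOn one_ne_zero).differentiableAt (hUopen.mem_nhds ⟨hp, trivial⟩)
    exact hda.hasFDerivAt
  -- partial derivatives
  have hpart1 : ∀ η s, T < η →
      HasDerivAt (fun a => W a s) (fderiv ℝ f (η, s) (1, 0)) η := by
    intro η s hη
    have hc : HasDerivAt (fun a : ℝ => ((a, s) : ℝ × ℝ)) ((1:ℝ), (0:ℝ)) η :=
      (hasDerivAt_id η).prodMk (hasDerivAt_const η s)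
    exact (hdiff (η, s) hη).comp_hasDerivAt η hc
  have hpart2 : ∀ η s, T < η →
      HasDerivAt (fun σ => W η σ) (fderiv ℝ f (η, s) (0, 1)) s := by
    intro η s hη
    have hc : HasDerivAt (fun σ : ℝ => ((η, σ) : ℝ × ℝ)) ((0:ℝ), (1:ℝ)) s :=
      (hasDerivAt_const s η).prodMk (hasDerivAt_id s)
    exact (hdiff (η, s) hη).comp_hasDerivAt s hc
  -- W ≤ 2 everywhere
  have hWle2 : ∀ η s, T < η → W η s ≤ 2 := by
    intro η s hη
    have hev : ∀ᶠ η₁ in nhdsWithin T (Set.Ioi T), W η s ≤ W η₁ s := by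
      filter_upwards [Ioo_mem_nhdsGT_of_mem (Set.left_mem_Ico.2 hη)] with η₁ hη₁
      exact hmono s hη₁.1 hη hη₁.2.le
    exact ge_of_tendsto (hbdT s) hev
  -- the characteristic curve
  set g : ℝ → ℝ := fun σ => η₀ * Real.exp (s₀ - σ) with hgdef
  set sstar : ℝ := s₀ + Real.log (η₀ / T) with hsdef
  have hlogpos : 0 < Real.log (η₀ / T) := Real.log_pos (by rw [lt_div_iff₀ hT]; linarith)
  have hs₀lt : s₀ < sstar := by simp [hsdef]; linarith
  have hgsstar : g sstar = T := by
    have : Real.exp (s₀ - sstar) = T / η₀ := by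
      rw [hsdef]
      rw [show s₀ - (s₀ + Real.log (η₀ / T)) = -Real.log (η₀ / T) by ring]
      rw [Real.exp_neg, Real.exp_log (by positivity)]
      field_simp
    rw [hgdef]; simp only [this]; field_simp
  have hgs₀ : g s₀ = η₀ := by simp [hgdef]
  have hgT : ∀ σ, σ < sstar → T < g σ := by
    intro σ hσ
    have : Real.exp (s₀ - sstar) < Real.exp (s₀ - σ) := Real.exp_lt_exp.2 (by linarith)
    have h2 := mul_lt_mul_of_pos_left this hη₀pos
    rw [← hgsstar]
    exact h2
  have hgcont : Continuous g := by
    apply Continuous.mul continuous_const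
    exact Real.continuous_exp.comp (continuous_const.sub continuous_id)
  have htg : Tendsto g (nhdsWithin sstar (Set.Iio sstar)) (nhds T) := by
    rw [← hgsstar]
    exact ((hgcont.tendsto sstar).mono_left (nhdsWithin_le_nhds (s := Set.Iio sstar)))
  -- zero derivative along characteristic
  have hφderiv : ∀ σ, σ < sstar → HasDerivAt (fun t => g t * W (g t) t) 0 σ := by
    intro σ hσ
    have hgσ : T < g σ := hgT σ hσ
    have hgd : HasDerivAt g (-(g σ)) σ := by
      have h1 : HasDerivAt (fun t : ℝ => s₀ - t) (-1) σ := (hasDerivAt_id σ).const_sub s₀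
      have h2 := h1.exp.const_mul η₀
      have h3 : η₀ * (Real.exp (s₀ - σ) * (-1)) = -(g σ) := by rw [hgdef]; ring
      rw [h3] at h2
      exact h2
    have hcurve : HasDerivAt (fun t : ℝ => ((g t, t) : ℝ × ℝ)) ((-(g σ), (1:ℝ))) σ :=
      hgd.prodMk (hasDerivAt_id σ)
    have hcomp0 : HasDerivAt (f ∘ (fun t => ((g t, t) : ℝ × ℝ)))
        (fderiv ℝ f (g σ, σ) (-(g σ), 1)) σ :=
      HasFDerivAt.comp_hasDerivAt (f := fun t => ((g t, t) : ℝ × ℝ)) σ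
        (hdiff (g σ, σ) hgσ) hcurve
    have hcomp : HasDerivAt (fun t => f (g t, t)) (fderiv ℝ f (g σ, σ) (-(g σ), 1)) σ := hcomp0
    have hmul : HasDerivAt (fun t => g t * f (g t, t))
        (-(g σ) * f (g σ, σ) + g σ * fderiv ℝ f (g σ, σ) (-(g σ), 1)) σ := hgd.mul hcomp
    have hL1 : fderiv ℝ f (g σ, σ) (-(g σ), 1)
        = -(g σ) * fderiv ℝ f (g σ, σ) (1, 0) + fderiv ℝ f (g σ, σ) (0, 1) := by
      have hdec : ((-(g σ) : ℝ), (1:ℝ)) = (-(g σ)) • ((1:ℝ), (0:ℝ)) + ((0:ℝ), (1:ℝ)) := by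
        simp
      rw [hdec, map_add, map_smul, smul_eq_mul]
    have hpde := hPDE (g σ) σ hgσ
    rw [(hpart2 (g σ) σ hgσ).deriv, (hpart1 (g σ) σ hgσ).deriv] at hpde
    have hzero : -(g σ) * f (g σ, σ) + g σ * fderiv ℝ f (g σ, σ) (-(g σ), 1) = 0 := by
      show -(g σ) * W (g σ) σ + g σ * fderiv ℝ f (g σ, σ) (-(g σ), 1) = 0
      rw [hL1, hpde]; ring
    rw [hzero] at hmul
    exact hmul
  -- constancy of η W along the characteristic
  have hconst : ∀ σ, s₀ ≤ σ → σ < sstar → g σ * W (g σ) σ = η₀ * W η₀ s₀ := by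
    intro σ hσ1 hσ2
    have key := constant_of_has_deriv_right_zero (f := fun t => g t * W (g t) t)
      (a := s₀) (b := σ)
      (fun t ht => ((hφderiv t (lt_of_le_of_lt ht.2 hσ2)).continuousAt).continuousWithinAt)
      (fun t ht => (hφderiv t (lt_of_le_of_lt ht.2.le hσ2)).hasDerivWithinAt)
      σ ⟨hσ1, le_rfl⟩
    have key2 : g σ * W (g σ) σ = g s₀ * W (g s₀) s₀ := key
    rw [hgs₀] at key2
    exact key2
  -- Upper bound: η₀ W(η₀,s₀) ≤ 2T
  have hKle : η₀ * W η₀ s₀ ≤ 2 * T := by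
    have hev : ∀ᶠ σ in nhdsWithin sstar (Set.Iio sstar), η₀ * W η₀ s₀ ≤ 2 * g σ := by
      filter_upwards [Ioo_mem_nhdsLT_of_mem (Set.right_mem_Ioc.2 hs₀lt)] with σ hσ
      rw [← hconst σ hσ.1.le hσ.2]
      have h2 := hWle2 (g σ) σ (hgT σ hσ.2)
      nlinarith [hgT σ hσ.2, hT]
    have h2g : Tendsto (fun σ => 2 * g σ) (nhdsWithin sstar (Set.Iio sstar)) (nhds (2 * T)) :=
      htg.const_mul 2
    exact ge_of_tendsto h2g hev
  -- Lower bound: 2T ≤ η₀ W(η₀,s₀)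
  have hKge : 2 * T ≤ η₀ * W η₀ s₀ := by
    have hstep : ∀ η', T < η' → η' < η₀ → T * W η' sstar ≤ η₀ * W η₀ s₀ := by
      intro η' hη'1 _
      have hWc : ContinuousAt (fun σ => W η' σ) sstar := by
        have hfc : ContinuousAt f (η', sstar) :=
          hC1.continuousOn.continuousAt (hUopen.mem_nhds ⟨hη'1, trivial⟩)
        exact hfc.comp ((continuous_const.prodMk continuous_id).continuousAt)
      have hcont' : Tendsto (fun σ => g σ * W η' σ) (nhdsWithin sstar (Set.Iio sstar))
          (nhds (T * W η' sstar)) :=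
        htg.mul (hWc.continuousWithinAt.tendsto)
      refine le_of_tendsto hcont' ?_
      have hev1 : ∀ᶠ σ in nhdsWithin sstar (Set.Iio sstar), g σ < η' :=
        htg (Iio_mem_nhds hη'1)
      filter_upwards [hev1, Ioo_mem_nhdsLT_of_mem (Set.right_mem_Ioc.2 hs₀lt)] with σ h1 h2
      have hgσ := hgT σ h2.2
      have hmW : W η' σ ≤ W (g σ) σ := hmono σ hgσ hη'1 h1.le
      calc g σ * W η' σ ≤ g σ * W (g σ) σ := by nlinarith
        _ = η₀ * W η₀ s₀ := hconst σ h2.1.le h2.2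
    have htend2 : Tendsto (fun η' => T * W η' sstar) (nhdsWithin T (Set.Ioi T))
        (nhds (T * 2)) := (hbdT sstar).const_mul T
    have hev2 : ∀ᶠ η' in nhdsWithin T (Set.Ioi T), T * W η' sstar ≤ η₀ * W η₀ s₀ := by
      filter_upwards [Ioo_mem_nhdsGT_of_mem (Set.left_mem_Ico.2 hη₀)] with η' hη'
      exact hstep η' hη'.1 hη'.2
    have := le_of_tendsto htend2 hev2
    linarith
  have : η₀ * W η₀ s₀ = 2 * T := le_antisymm hKle hKge
  field_simp
  linarith
end
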